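/- Let τ ∈ ℂ with Im τ > 0 and define the odd theta function θ̃: ℂ → ℂ by the absolutely convergent series θ̃(z) = Σ_{n ∈ ℤ} (−1)^n · exp(πi(n + 1/2)²τ) · exp((2n+1)πiz). Then for all a, b, c, d ∈ ℂ the three-term (Fay trisecant / Weierstrass) identity holds: θ̃(a+c)·θ̃(a−c)·θ̃(b+d)·θ̃(b−d) − θ̃(a+b)·θ̃(a−b)·θ̃(c+d)·θ̃(c−d) + θ̃(a+d)·θ̃(a−d)·θ̃(c+b)·θ̃(c−b) = 0. -/

import Mathlib

open Complex Function in
/-- The odd Jacobi theta function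
`θ̃(z) = Σ_{n ∈ ℤ} (−1)^n exp(πi(n+1/2)²τ) exp((2n+1)πiz)`. -/
noncomputable def thetaOdd (τ : ℂ) (z : ℂ) : ℂ :=
  ∑' n : ℤ,
    (-1 : ℂ) ^ n *
      Complex.exp (Real.pi * Complex.I * ((n : ℂ) + 1 / 2) ^ 2 * τ) *
      Complex.exp ((2 * (n : ℂ) + 1) * Real.pi * Complex.I * z)

open Complex Function

noncomputable section

namespace FayAux

/-- The summand of `thetaOdd`. -/
def oddTerm (τ z : ℂ) (n : ℤ) : ℂ :=
  (-1 : ℂ) ^ n *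
    Complex.exp (Real.pi * Complex.I * ((n : ℂ) + 1 / 2) ^ 2 * τ) *
    Complex.exp ((2 * (n : ℂ) + 1) * Real.pi * Complex.I * z)

lemma neg_one_zpow_eq_exp (n : ℤ) :
    (-1 : ℂ) ^ n = Complex.exp ((Real.pi : ℂ) * Complex.I * n) := by
  rw [show ((Real.pi : ℂ) * Complex.I * n) = n * ((Real.pi : ℂ) * Complex.I) by ring,
    Complex.exp_int_mul, Complex.exp_pi_mul_I]

lemma oddTerm_eq (τ z : ℂ) (n : ℤ) :
    oddTerm τ z n = Complex.exp ((Real.pi : ℂ) * Complex.I * τ / 4 +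
        (Real.pi : ℂ) * Complex.I * z) * jacobiTheta₂_term n (z + τ / 2 + 1 / 2) τ := by
  rw [oddTerm, jacobiTheta₂_term, neg_one_zpow_eq_exp, ← Complex.exp_add, ← Complex.exp_add,
    ← Complex.exp_add]
  congr 1
  ring

lemma summable_norm_oddTerm {τ : ℂ} (hτ : 0 < τ.im) (z : ℂ) :
    Summable fun n : ℤ => ‖oddTerm τ z n‖ := by
  have h : Summable fun n : ℤ => ‖jacobiTheta₂_term n (z + τ / 2 + 1 / 2) τ‖ := by
    apply (summable_pow_mul_jacobiTheta₂_term_bound |(z + τ / 2 + 1 / 2).im| hτ 0).of_norm_bounded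
    intro n
    rw [norm_norm]
    simpa only [pow_zero, one_mul] using norm_jacobiTheta₂_term_le hτ le_rfl le_rfl n
  have := h.mul_left ‖Complex.exp ((Real.pi : ℂ) * Complex.I * τ / 4 +
      (Real.pi : ℂ) * Complex.I * z)‖
  refine this.congr fun n => ?_
  rw [oddTerm_eq, norm_mul]

lemma hasSum_oddTerm {τ : ℂ} (hτ : 0 < τ.im) (z : ℂ) :
    HasSum (oddTerm τ z) (thetaOdd τ z) :=
  (summable_norm_oddTerm hτ z).of_norm.hasSum

/-- Sign `(-1)^n` as an if-then-else. -/
def sgn (n : ℤ) : ℂ := if Even n then 1 else -1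

lemma sgn_eq (n : ℤ) : sgn n = (-1 : ℂ) ^ n := by
  rcases Int.even_or_odd n with h | h
  · simp [sgn, h, h.neg_one_zpow]
  · simp [sgn, Int.not_even_iff_odd.2 h, h.neg_one_zpow]

/-- The summand of `θ(x+y)·θ(x−y)` as a double series over `ℤ²`. -/
def pairTerm (τ x y : ℂ) (p : ℤ × ℤ) : ℂ :=
  (if Even (p.1 + p.2) then 0 else 1) * sgn (p.1 + 1) *
    Complex.exp ((Real.pi : ℂ) * Complex.I *
      (τ * ((p.1 : ℂ) ^ 2 + (p.2 : ℂ) ^ 2) / 2 + 2 * ((p.1 : ℂ) * x + (p.2 : ℂ) * y)))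

def pairMap : ℤ × ℤ → ℤ × ℤ := fun p => (p.1 + p.2 + 1, p.1 - p.2)

lemma pairMap_injective : Function.Injective pairMap := by
  intro p q h
  rw [Prod.ext_iff] at h ⊢
  simp only [pairMap] at h
  omega

lemma pairTerm_comp (τ x y : ℂ) (p : ℤ × ℤ) :
    pairTerm τ x y (pairMap p) = oddTerm τ (x + y) p.1 * oddTerm τ (x - y) p.2 := by
  rcases p with ⟨m, n⟩
  have h2 : (-1 : ℂ) ≠ 0 := by norm_num
  have hodd : ¬ Even ((m + n + 1) + (m - n)) := by
    rw [Int.even_iff]; omega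
  have hsgn : sgn (m + n + 1 + 1) = (-1 : ℂ) ^ m * (-1 : ℂ) ^ n := by
    rw [sgn_eq, show m + n + 1 + 1 = m + (n + 2) from by ring, zpow_add₀ h2, zpow_add₀ h2]
    norm_num
  have hE : Complex.exp ((Real.pi : ℂ) * Complex.I *
        (τ * (((m + n + 1 : ℤ) : ℂ) ^ 2 + ((m - n : ℤ) : ℂ) ^ 2) / 2 +
          2 * (((m + n + 1 : ℤ) : ℂ) * x + ((m - n : ℤ) : ℂ) * y)))
      = Complex.exp (Real.pi * Complex.I * ((m : ℂ) + 1 / 2) ^ 2 * τ) *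
        Complex.exp ((2 * (m : ℂ) + 1) * Real.pi * Complex.I * (x + y)) *
        (Complex.exp (Real.pi * Complex.I * ((n : ℂ) + 1 / 2) ^ 2 * τ) *
          Complex.exp ((2 * (n : ℂ) + 1) * Real.pi * Complex.I * (x - y))) := by
    rw [← Complex.exp_add, ← Complex.exp_add, ← Complex.exp_add]
    congr 1
    push_cast
    ring
  have hpm : pairMap (m, n) = (m + n + 1, m - n) := rfl
  rw [hpm]
  show (if Even ((m + n + 1) + (m - n)) then (0:ℂ) else 1) * sgn ((m + n + 1) + 1) * _ = _
  rw [if_neg hodd, one_mul, hsgn, hE, oddTerm, oddTerm]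
  ring

lemma pairTerm_eq_zero (τ x y : ℂ) {p : ℤ × ℤ} (hp : p ∉ Set.range pairMap) :
    pairTerm τ x y p = 0 := by
  rcases p with ⟨A, C⟩
  have heven : Even (A + C) := by
    by_contra hodd
    rw [Int.even_iff] at hodd
    exact hp ⟨((A + C - 1) / 2, (A - C - 1) / 2), by
      rw [pairMap, Prod.ext_iff]
      constructor <;> simp <;> omega⟩
  show (if Even (A + C) then (0:ℂ) else 1) * _ * _ = 0
  rw [if_pos heven, zero_mul, zero_mul]

lemma hasSum_pairTerm {τ : ℂ} (hτ : 0 < τ.im) (x y : ℂ) :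
    HasSum (pairTerm τ x y) (thetaOdd τ (x + y) * thetaOdd τ (x - y)) := by
  have h1 := hasSum_oddTerm hτ (x + y)
  have h2 := hasSum_oddTerm hτ (x - y)
  have hs : Summable fun p : ℤ × ℤ => oddTerm τ (x + y) p.1 * oddTerm τ (x - y) p.2 :=
    summable_mul_of_summable_norm (summable_norm_oddTerm hτ _) (summable_norm_oddTerm hτ _)
  have hmul : HasSum (fun p : ℤ × ℤ => oddTerm τ (x + y) p.1 * oddTerm τ (x - y) p.2)
      (thetaOdd τ (x + y) * thetaOdd τ (x - y)) := h1.mul h2 hs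
  rw [← Function.Injective.hasSum_iff pairMap_injective
    (fun p hp => pairTerm_eq_zero τ x y hp)]
  exact hmul.congr_fun fun p => pairTerm_comp τ x y p

lemma summable_norm_pairTerm {τ : ℂ} (hτ : 0 < τ.im) (x y : ℂ) :
    Summable fun p : ℤ × ℤ => ‖pairTerm τ x y p‖ := by
  rw [← Function.Injective.summable_iff pairMap_injective
    (fun p hp => by rw [pairTerm_eq_zero τ x y hp, norm_zero])]
  have h : Summable fun p : ℤ × ℤ => ‖oddTerm τ (x + y) p.1 * oddTerm τ (x - y) p.2‖ :=
    (summable_norm_oddTerm hτ _).mul_norm (summable_norm_oddTerm hτ _)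
  exact h.congr fun p => by
    simp only [comp_apply, pairTerm_comp]

/-- Reindexing equivalences `ℤ⁴ ≃ ℤ² × ℤ²`. -/
def σ₁ : (ℤ × ℤ × ℤ × ℤ) ≃ (ℤ × ℤ) × (ℤ × ℤ) where
  toFun k := ((k.1, k.2.2.1), (k.2.1, k.2.2.2))
  invFun q := (q.1.1, q.2.1, q.1.2, q.2.2)
  left_inv k := rfl
  right_inv q := rfl

def σ₂ : (ℤ × ℤ × ℤ × ℤ) ≃ (ℤ × ℤ) × (ℤ × ℤ) where
  toFun k := ((k.1, k.2.1), (k.2.2.1, k.2.2.2))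
  invFun q := (q.1.1, q.1.2, q.2.1, q.2.2)
  left_inv k := rfl
  right_inv q := rfl

def σ₃ : (ℤ × ℤ × ℤ × ℤ) ≃ (ℤ × ℤ) × (ℤ × ℤ) where
  toFun k := ((k.1, k.2.2.2), (k.2.2.1, k.2.1))
  invFun q := (q.1.1, q.2.2, q.2.1, q.1.2)
  left_inv k := rfl
  right_inv q := rfl

/-- The pointwise three-term cancellation. -/
lemma key (τ a b c d : ℂ) (A B C D : ℤ) :
    pairTerm τ a c (A, C) * pairTerm τ b d (B, D) -
      pairTerm τ a b (A, B) * pairTerm τ c d (C, D) +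
      pairTerm τ a d (A, D) * pairTerm τ c b (C, B) = 0 := by
  have h1 : Complex.exp ((Real.pi : ℂ) * Complex.I *
        (τ * ((A : ℂ) ^ 2 + (C : ℂ) ^ 2) / 2 + 2 * ((A : ℂ) * a + (C : ℂ) * c))) *
      Complex.exp ((Real.pi : ℂ) * Complex.I *
        (τ * ((B : ℂ) ^ 2 + (D : ℂ) ^ 2) / 2 + 2 * ((B : ℂ) * b + (D : ℂ) * d)))
      = Complex.exp ((Real.pi : ℂ) * Complex.I *
        (τ * ((A : ℂ) ^ 2 + (B : ℂ) ^ 2 + (C : ℂ) ^ 2 + (D : ℂ) ^ 2) / 2 +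
          2 * ((A : ℂ) * a + (B : ℂ) * b + (C : ℂ) * c + (D : ℂ) * d))) := by
    rw [← Complex.exp_add]; congr 1; ring
  have h2 : Complex.exp ((Real.pi : ℂ) * Complex.I *
        (τ * ((A : ℂ) ^ 2 + (B : ℂ) ^ 2) / 2 + 2 * ((A : ℂ) * a + (B : ℂ) * b))) *
      Complex.exp ((Real.pi : ℂ) * Complex.I *
        (τ * ((C : ℂ) ^ 2 + (D : ℂ) ^ 2) / 2 + 2 * ((C : ℂ) * c + (D : ℂ) * d)))
      = Complex.exp ((Real.pi : ℂ) * Complex.I *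
        (τ * ((A : ℂ) ^ 2 + (B : ℂ) ^ 2 + (C : ℂ) ^ 2 + (D : ℂ) ^ 2) / 2 +
          2 * ((A : ℂ) * a + (B : ℂ) * b + (C : ℂ) * c + (D : ℂ) * d))) := by
    rw [← Complex.exp_add]; congr 1; ring
  have h3 : Complex.exp ((Real.pi : ℂ) * Complex.I *
        (τ * ((A : ℂ) ^ 2 + (D : ℂ) ^ 2) / 2 + 2 * ((A : ℂ) * a + (D : ℂ) * d))) *
      Complex.exp ((Real.pi : ℂ) * Complex.I *
        (τ * ((C : ℂ) ^ 2 + (B : ℂ) ^ 2) / 2 + 2 * ((C : ℂ) * c + (B : ℂ) * b)))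
      = Complex.exp ((Real.pi : ℂ) * Complex.I *
        (τ * ((A : ℂ) ^ 2 + (B : ℂ) ^ 2 + (C : ℂ) ^ 2 + (D : ℂ) ^ 2) / 2 +
          2 * ((A : ℂ) * a + (B : ℂ) * b + (C : ℂ) * c + (D : ℂ) * d))) := by
    rw [← Complex.exp_add]; congr 1; ring
  have hc : ((if Even (A + C) then (0:ℂ) else 1) * sgn (A + 1) *
        ((if Even (B + D) then (0:ℂ) else 1) * sgn (B + 1))) -
      ((if Even (A + B) then (0:ℂ) else 1) * sgn (A + 1) *
        ((if Even (C + D) then (0:ℂ) else 1) * sgn (C + 1))) +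
      ((if Even (A + D) then (0:ℂ) else 1) * sgn (A + 1) *
        ((if Even (C + B) then (0:ℂ) else 1) * sgn (C + 1))) = 0 := by
    simp only [sgn]
    by_cases hA : Even A <;> by_cases hB : Even B <;> by_cases hC : Even C <;>
      by_cases hD : Even D <;>
      simp [Int.even_add, Int.even_add_one, hA, hB, hC, hD, ← Int.not_even_iff_odd]
  calc pairTerm τ a c (A, C) * pairTerm τ b d (B, D) -
      pairTerm τ a b (A, B) * pairTerm τ c d (C, D) +
      pairTerm τ a d (A, D) * pairTerm τ c b (C, B)
      = ((if Even (A + C) then (0:ℂ) else 1) * sgn (A + 1) *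
          ((if Even (B + D) then (0:ℂ) else 1) * sgn (B + 1))) *
          (Complex.exp ((Real.pi : ℂ) * Complex.I *
            (τ * ((A : ℂ) ^ 2 + (C : ℂ) ^ 2) / 2 + 2 * ((A : ℂ) * a + (C : ℂ) * c))) *
          Complex.exp ((Real.pi : ℂ) * Complex.I *
            (τ * ((B : ℂ) ^ 2 + (D : ℂ) ^ 2) / 2 + 2 * ((B : ℂ) * b + (D : ℂ) * d)))) -
        ((if Even (A + B) then (0:ℂ) else 1) * sgn (A + 1) *
          ((if Even (C + D) then (0:ℂ) else 1) * sgn (C + 1))) *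
          (Complex.exp ((Real.pi : ℂ) * Complex.I *
            (τ * ((A : ℂ) ^ 2 + (B : ℂ) ^ 2) / 2 + 2 * ((A : ℂ) * a + (B : ℂ) * b))) *
          Complex.exp ((Real.pi : ℂ) * Complex.I *
            (τ * ((C : ℂ) ^ 2 + (D : ℂ) ^ 2) / 2 + 2 * ((C : ℂ) * c + (D : ℂ) * d)))) +
        ((if Even (A + D) then (0:ℂ) else 1) * sgn (A + 1) *
          ((if Even (C + B) then (0:ℂ) else 1) * sgn (C + 1))) *
          (Complex.exp ((Real.pi : ℂ) * Complex.I *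
            (τ * ((A : ℂ) ^ 2 + (D : ℂ) ^ 2) / 2 + 2 * ((A : ℂ) * a + (D : ℂ) * d))) *
          Complex.exp ((Real.pi : ℂ) * Complex.I *
            (τ * ((C : ℂ) ^ 2 + (B : ℂ) ^ 2) / 2 + 2 * ((C : ℂ) * c + (B : ℂ) * b)))) := by
        simp only [pairTerm]; ring
    _ = 0 := by
        rw [h1, h2, h3]
        linear_combination (Complex.exp ((Real.pi : ℂ) * Complex.I *
          (τ * ((A : ℂ) ^ 2 + (B : ℂ) ^ 2 + (C : ℂ) ^ 2 + (D : ℂ) ^ 2) / 2 +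
            2 * ((A : ℂ) * a + (B : ℂ) * b + (C : ℂ) * c + (D : ℂ) * d)))) * hc

end FayAux

end

set_option maxHeartbeats 1000000 in
open FayAux in
theorem fay_trisecant_identity_for_odd_theta
    (τ : ℂ) (hτ : 0 < τ.im) (a b c d : ℂ) :
    thetaOdd τ (a + c) * thetaOdd τ (a - c) * thetaOdd τ (b + d) *
          thetaOdd τ (b - d) -
        thetaOdd τ (a + b) * thetaOdd τ (a - b) * thetaOdd τ (c + d) *
          thetaOdd τ (c - d) +
        thetaOdd τ (a + d) * thetaOdd τ (a - d) * thetaOdd τ (c + b) *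
          thetaOdd τ (c - b) = 0 := by
  -- summability of the double products
  have hsf1 : Summable fun q : (ℤ × ℤ) × (ℤ × ℤ) =>
      pairTerm τ a c q.1 * pairTerm τ b d q.2 :=
    summable_mul_of_summable_norm (summable_norm_pairTerm hτ a c) (summable_norm_pairTerm hτ b d)
  have hsf2 : Summable fun q : (ℤ × ℤ) × (ℤ × ℤ) =>
      pairTerm τ a b q.1 * pairTerm τ c d q.2 :=
    summable_mul_of_summable_norm (summable_norm_pairTerm hτ a b) (summable_norm_pairTerm hτ c d)
  have hsf3 : Summable fun q : (ℤ × ℤ) × (ℤ × ℤ) =>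
      pairTerm τ a d q.1 * pairTerm τ c b q.2 :=
    summable_mul_of_summable_norm (summable_norm_pairTerm hτ a d) (summable_norm_pairTerm hτ c b)
  have hS1 : Summable fun k : ℤ × ℤ × ℤ × ℤ =>
      pairTerm τ a c (k.1, k.2.2.1) * pairTerm τ b d (k.2.1, k.2.2.2) :=
    (σ₁.summable_iff.mpr hsf1).congr fun k => rfl
  have hS2 : Summable fun k : ℤ × ℤ × ℤ × ℤ =>
      pairTerm τ a b (k.1, k.2.1) * pairTerm τ c d (k.2.2.1, k.2.2.2) :=
    (σ₂.summable_iff.mpr hsf2).congr fun k => rfl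
  have hS3 : Summable fun k : ℤ × ℤ × ℤ × ℤ =>
      pairTerm τ a d (k.1, k.2.2.2) * pairTerm τ c b (k.2.2.1, k.2.1) :=
    (σ₃.summable_iff.mpr hsf3).congr fun k => rfl
  have e1 : thetaOdd τ (a + c) * thetaOdd τ (a - c) * thetaOdd τ (b + d) * thetaOdd τ (b - d)
      = ∑' k : ℤ × ℤ × ℤ × ℤ, pairTerm τ a c (k.1, k.2.2.1) * pairTerm τ b d (k.2.1, k.2.2.2) := by
    calc thetaOdd τ (a + c) * thetaOdd τ (a - c) * thetaOdd τ (b + d) * thetaOdd τ (b - d)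
        = (∑' p : ℤ × ℤ, pairTerm τ a c p) * ∑' p : ℤ × ℤ, pairTerm τ b d p := by
          rw [(hasSum_pairTerm hτ a c).tsum_eq, (hasSum_pairTerm hτ b d).tsum_eq]; ring
      _ = ∑' q : (ℤ × ℤ) × (ℤ × ℤ), pairTerm τ a c q.1 * pairTerm τ b d q.2 :=
          tsum_mul_tsum_of_summable_norm (summable_norm_pairTerm hτ a c)
            (summable_norm_pairTerm hτ b d)
      _ = _ := (Equiv.tsum_eq σ₁ fun q => pairTerm τ a c q.1 * pairTerm τ b d q.2).symm
  have e2 : thetaOdd τ (a + b) * thetaOdd τ (a - b) * thetaOdd τ (c + d) * thetaOdd τ (c - d)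
      = ∑' k : ℤ × ℤ × ℤ × ℤ, pairTerm τ a b (k.1, k.2.1) * pairTerm τ c d (k.2.2.1, k.2.2.2) := by
    calc thetaOdd τ (a + b) * thetaOdd τ (a - b) * thetaOdd τ (c + d) * thetaOdd τ (c - d)
        = (∑' p : ℤ × ℤ, pairTerm τ a b p) * ∑' p : ℤ × ℤ, pairTerm τ c d p := by
          rw [(hasSum_pairTerm hτ a b).tsum_eq, (hasSum_pairTerm hτ c d).tsum_eq]; ring
      _ = ∑' q : (ℤ × ℤ) × (ℤ × ℤ), pairTerm τ a b q.1 * pairTerm τ c d q.2 :=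
          tsum_mul_tsum_of_summable_norm (summable_norm_pairTerm hτ a b)
            (summable_norm_pairTerm hτ c d)
      _ = _ := (Equiv.tsum_eq σ₂ fun q => pairTerm τ a b q.1 * pairTerm τ c d q.2).symm
  have e3 : thetaOdd τ (a + d) * thetaOdd τ (a - d) * thetaOdd τ (c + b) * thetaOdd τ (c - b)
      = ∑' k : ℤ × ℤ × ℤ × ℤ, pairTerm τ a d (k.1, k.2.2.2) * pairTerm τ c b (k.2.2.1, k.2.1) := by
    calc thetaOdd τ (a + d) * thetaOdd τ (a - d) * thetaOdd τ (c + b) * thetaOdd τ (c - b)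
        = (∑' p : ℤ × ℤ, pairTerm τ a d p) * ∑' p : ℤ × ℤ, pairTerm τ c b p := by
          rw [(hasSum_pairTerm hτ a d).tsum_eq, (hasSum_pairTerm hτ c b).tsum_eq]; ring
      _ = ∑' q : (ℤ × ℤ) × (ℤ × ℤ), pairTerm τ a d q.1 * pairTerm τ c b q.2 :=
          tsum_mul_tsum_of_summable_norm (summable_norm_pairTerm hτ a d)
            (summable_norm_pairTerm hτ c b)
      _ = _ := (Equiv.tsum_eq σ₃ fun q => pairTerm τ a d q.1 * pairTerm τ c b q.2).symm
  rw [e1, e2, e3, ← Summable.tsum_sub hS1 hS2, ← Summable.tsum_add (hS1.sub hS2) hS3]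
  calc (∑' k : ℤ × ℤ × ℤ × ℤ,
        (pairTerm τ a c (k.1, k.2.2.1) * pairTerm τ b d (k.2.1, k.2.2.2) -
          pairTerm τ a b (k.1, k.2.1) * pairTerm τ c d (k.2.2.1, k.2.2.2) +
          pairTerm τ a d (k.1, k.2.2.2) * pairTerm τ c b (k.2.2.1, k.2.1)))
      = ∑' _k : ℤ × ℤ × ℤ × ℤ, (0 : ℂ) :=
        tsum_congr fun ⟨A, B, C, D⟩ => key τ a b c d A B C D
    _ = 0 := tsum_zero
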